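/- arXiv:1710.05689 — 2 statements merged into one kernel-verified Lean document; each statement's English description precedes it below -/
import Mathlib

section
/- Let V = ⊕_{i∈I} V_i and let T : V⊗V → V⊗V be a linear map with components T_{ij} : V_i⊗V_j → V_j⊗V_i satisfying the braid equation. For any scalars λ_{ij} ∈ K, the rescaled map T′ = Σ_{i,j} λ_{ij} T_{ij} also satisfies the braid equation T′_1 T′_2 T′_1 = T′_2 T′_1 T′_2. -/
/-!
Both `T` and `T'` map each component `V i ⊗ V j` to `V j ⊗ V i`, with `T' = λ i j • T` there.
Hence each side of the braid equation maps the component `V i ⊗ V j ⊗ V k` to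
`V k ⊗ V j ⊗ V i`, through a word in the components `Tc` that swaps every pair of indices
exactly once. Rescaling multiplies either side on that component by the same factor
`λ i j * λ i k * λ j k`, so the braid equation for `T` gives it for `T'`.
-/

open TensorProduct LinearMap DirectSum

noncomputable section

variable (K : Type) [Field K]

/-- The operator `f ⊗ id` on the first two factors of `M ⊗ (M ⊗ M)`. -/
def op1 {M : Type} [AddCommGroup M] [Module K M]
    (f : M ⊗[K] M →ₗ[K] M ⊗[K] M) : M ⊗[K] (M ⊗[K] M) →ₗ[K] M ⊗[K] (M ⊗[K] M) :=
  (TensorProduct.assoc K M M M).toLinearMap ∘ₗ (LinearMap.rTensor M f) ∘ₗ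
    (TensorProduct.assoc K M M M).symm.toLinearMap

/-- The operator `id ⊗ f` on the last two factors of `M ⊗ (M ⊗ M)`. -/
def op2 {M : Type} [AddCommGroup M] [Module K M]
    (f : M ⊗[K] M →ₗ[K] M ⊗[K] M) : M ⊗[K] (M ⊗[K] M) →ₗ[K] M ⊗[K] (M ⊗[K] M) :=
  LinearMap.lTensor M f

variable {I : Type} [Fintype I] [DecidableEq I] (V : I → Type)
  [∀ i, AddCommGroup (V i)] [∀ i, Module K (V i)]

section

variable {K} {A B A' B' : Type*} (C : Type*) [AddCommGroup A] [Module K A] [AddCommGroup B]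
  [Module K B] [AddCommGroup A'] [Module K A'] [AddCommGroup B'] [Module K B']
  [AddCommGroup C] [Module K C]

def op1' (g : A ⊗[K] B →ₗ[K] A' ⊗[K] B') : A ⊗[K] (B ⊗[K] C) →ₗ[K] A' ⊗[K] (B' ⊗[K] C) :=
  (TensorProduct.assoc K A' B' C).toLinearMap ∘ₗ rTensor C g ∘ₗ
    (TensorProduct.assoc K A B C).symm.toLinearMap

theorem op1'_smul (c : K) (g : A ⊗[K] B →ₗ[K] A' ⊗[K] B') : op1' C (c • g) = c • op1' C g := by
  simp only [op1', rTensor_smul, smul_comp, comp_smul]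

end

section

variable {K} {ι : Type*} {W : ι → Type*} [∀ i, AddCommGroup (W i)] [∀ i, Module K (W i)]
  {M : Type*} [AddCommGroup M] [Module K M] (e : ∀ i, W i →ₗ[K] M)

def incl2 (i j : ι) : W i ⊗[K] W j →ₗ[K] M ⊗[K] M :=
  TensorProduct.map (e i) (e j)

def incl3 (i j k : ι) : W i ⊗[K] (W j ⊗[K] W k) →ₗ[K] M ⊗[K] (M ⊗[K] M) :=
  TensorProduct.map (e i) (incl2 e j k)

theorem ext_incl3_lof [DecidableEq ι] {N : Type*} [AddCommGroup N] [Module K N]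
    {f g : (⨁ i, W i) ⊗[K] ((⨁ i, W i) ⊗[K] (⨁ i, W i)) →ₗ[K] N}
    (h : ∀ i j k, f ∘ₗ incl3 (lof K ι W) i j k = g ∘ₗ incl3 (lof K ι W) i j k) : f = g := by
  ext i x j y k z
  exact congr($(h i j k) (x ⊗ₜ (y ⊗ₜ z)))

end

section

variable {K} {ι : Type*} {W : ι → Type*} [∀ i, AddCommGroup (W i)] [∀ i, Module K (W i)]
  {M : Type} [AddCommGroup M] [Module K M] (e : ∀ i, W i →ₗ[K] M)

theorem op1_comp_incl3 {f : M ⊗[K] M →ₗ[K] M ⊗[K] M} {i j i' j' : ι}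
    {g : W i ⊗[K] W j →ₗ[K] W i' ⊗[K] W j'} (h : f ∘ₗ incl2 e i j = incl2 e i' j' ∘ₗ g)
    (k : ι) : op1 K f ∘ₗ incl3 e i j k = incl3 e i' j' k ∘ₗ op1' (W k) g := by
  refine ext_threefold' fun x y z => ?_
  have hxy := congr($h (x ⊗ₜ y))
  simp only [incl2, coe_comp, Function.comp_apply, map_tmul] at hxy
  simp only [op1, op1', incl3, incl2, coe_comp, LinearEquiv.coe_coe, Function.comp_apply,
    map_tmul, assoc_symm_tmul, rTensor_tmul, hxy, map_map_assoc]

theorem op2_comp_incl3 {f : M ⊗[K] M →ₗ[K] M ⊗[K] M} {j k j' k' : ι}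
    {g : W j ⊗[K] W k →ₗ[K] W j' ⊗[K] W k'} (h : f ∘ₗ incl2 e j k = incl2 e j' k' ∘ₗ g)
    (i : ι) : op2 K f ∘ₗ incl3 e i j k = incl3 e i j' k' ∘ₗ lTensor (W i) g := by
  rw [op2, incl3, lTensor_comp_map, h, incl3, map_comp_lTensor]

variable {f : M ⊗[K] M →ₗ[K] M ⊗[K] M} {g : ∀ i j, W i ⊗[K] W j →ₗ[K] W j ⊗[K] W i}

theorem braidLeft_comp_incl3 (h : ∀ i j, f ∘ₗ incl2 e i j = incl2 e j i ∘ₗ g i j)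
    (i j k : ι) :
    op1 K f ∘ₗ op2 K f ∘ₗ op1 K f ∘ₗ incl3 e i j k =
      incl3 e k j i ∘ₗ op1' (W i) (g j k) ∘ₗ lTensor (W j) (g i k) ∘ₗ op1' (W k) (g i j) := by
  rw [op1_comp_incl3 e (h i j), ← comp_assoc _ (incl3 e j i k), op2_comp_incl3 e (h i k),
    comp_assoc, ← comp_assoc _ (incl3 e j k i), op1_comp_incl3 e (h j k), comp_assoc]

theorem braidRight_comp_incl3 (h : ∀ i j, f ∘ₗ incl2 e i j = incl2 e j i ∘ₗ g i j)
    (i j k : ι) :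
    op2 K f ∘ₗ op1 K f ∘ₗ op2 K f ∘ₗ incl3 e i j k =
      incl3 e k j i ∘ₗ lTensor (W k) (g i j) ∘ₗ op1' (W j) (g i k) ∘ₗ lTensor (W i) (g j k) := by
  rw [op2_comp_incl3 e (h j k), ← comp_assoc _ (incl3 e i k j), op1_comp_incl3 e (h i k),
    comp_assoc, ← comp_assoc _ (incl3 e k i j), op2_comp_incl3 e (h i j), comp_assoc]

end

/-- If `T` with components `T_{ij}` satisfies the braid equation, then the rescaled map
`T' = Σ λ_{ij} T_{ij}` also satisfies the braid equation. -/
theorem braid_of_rescale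
    (T T' : (⨁ i : I, V i) ⊗[K] (⨁ i : I, V i) →ₗ[K] (⨁ i : I, V i) ⊗[K] (⨁ i : I, V i))
    (Tc : ∀ i j : I, V i ⊗[K] V j →ₗ[K] V j ⊗[K] V i)
    (lam : I → I → K)
    (hT : ∀ (i j : I) (x : V i) (y : V j),
      T (DirectSum.lof K I V i x ⊗ₜ[K] DirectSum.lof K I V j y) =
        TensorProduct.map (DirectSum.lof K I V j) (DirectSum.lof K I V i) (Tc i j (x ⊗ₜ[K] y)))
    (hT' : ∀ (i j : I) (x : V i) (y : V j),
      T' (DirectSum.lof K I V i x ⊗ₜ[K] DirectSum.lof K I V j y) =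
        lam i j • TensorProduct.map (DirectSum.lof K I V j) (DirectSum.lof K I V i)
          (Tc i j (x ⊗ₜ[K] y)))
    (hbraid : op1 K T ∘ₗ op2 K T ∘ₗ op1 K T = op2 K T ∘ₗ op1 K T ∘ₗ op2 K T) :
    op1 K T' ∘ₗ op2 K T' ∘ₗ op1 K T' = op2 K T' ∘ₗ op1 K T' ∘ₗ op2 K T' := by
  have hTc : ∀ i j, T ∘ₗ incl2 (lof K I V) i j = incl2 (lof K I V) j i ∘ₗ Tc i j :=
    fun i j => TensorProduct.ext' (hT i j)
  have hTc' : ∀ i j,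
      T' ∘ₗ incl2 (lof K I V) i j = incl2 (lof K I V) j i ∘ₗ (lam i j • Tc i j) :=
    fun i j => TensorProduct.ext' fun x y => by simp [incl2, hT' i j]
  refine ext_incl3_lof fun i j k => ?_
  have hcomp := congr($hbraid ∘ₗ incl3 (lof K I V) i j k)
  simp only [comp_assoc, braidLeft_comp_incl3 _ hTc, braidRight_comp_incl3 _ hTc] at hcomp
  simp only [comp_assoc, braidLeft_comp_incl3 _ hTc', braidRight_comp_incl3 _ hTc']
  simp only [op1'_smul, lTensor_smul, smul_comp, comp_smul, smul_smul, hcomp]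
  congr 1
  ring

end
end

section
/- Suppose 0 < q < 1, q ≠ 1, N ≥ 2, and let β be a linear functional on the span of the elements M_{ij} = (id+σ)(w_i⊗v_j) (with λ′ = q as above), with β vanishing on all V_{ab} and W_{ab}. If (β⊗id − id⊗β)(X_{ijk}) = 0 for all i and all j ≥ k (evaluated via the two expansions of X_{ijk} in terms of relations tensor generators and generators tensor relations), then there is a constant c ∈ K such that β(M_{ij}) = δ_{ij}·c for all i,j. -/
open TensorProduct LinearMap

noncomputable section

variable (K : Type) [Field K]

def Sym3 {M : Type} [AddCommGroup M] [Module K M]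
    (σ : M ⊗[K] M →ₗ[K] M ⊗[K] M) : M ⊗[K] (M ⊗[K] M) →ₗ[K] M ⊗[K] (M ⊗[K] M) :=
  LinearMap.id + op1 K σ + op2 K σ + op1 K σ ∘ₗ op2 K σ + op2 K σ ∘ₗ op1 K σ +
    op1 K σ ∘ₗ op2 K σ ∘ₗ op1 K σ

/-- `β ⊗ id` on triple tensors. -/
def betaId {M : Type} [AddCommGroup M] [Module K M]
    (β : M ⊗[K] M →ₗ[K] K) : M ⊗[K] (M ⊗[K] M) →ₗ[K] M :=
  (TensorProduct.lid K M).toLinearMap ∘ₗ LinearMap.rTensor M β ∘ₗ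
    (TensorProduct.assoc K M M M).symm.toLinearMap

/-- `id ⊗ β` on triple tensors. -/
def idBeta {M : Type} [AddCommGroup M] [Module K M]
    (β : M ⊗[K] M →ₗ[K] K) : M ⊗[K] (M ⊗[K] M) →ₗ[K] M :=
  (TensorProduct.rid K M).toLinearMap ∘ₗ LinearMap.lTensor M β

variable (N : ℕ) (q : K)

abbrev H := (Fin N → K) × (Fin N → K)

def hb : Module.Basis (Fin N ⊕ Fin N) K (H K N) :=
  (Pi.basisFun K (Fin N)).prod (Pi.basisFun K (Fin N))

def vB (i : Fin N) : H K N := hb K N (Sum.inl i)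
def wB (i : Fin N) : H K N := hb K N (Sum.inr i)

/-- The braid-equation solution `σ` on `H ⊗ H` with components as in the paper (`λ′ = q`). -/
def sigmaH : (H K N) ⊗[K] (H K N) →ₗ[K] (H K N) ⊗[K] (H K N) :=
  ((hb K N).tensorProduct (hb K N)).constr K fun p =>
    match p with
    | (Sum.inl i, Sum.inl j) =>
        (if i = j then q ^ 2 else q) • (vB K N j ⊗ₜ[K] vB K N i) +
        (if (i : ℕ) < (j : ℕ) then q * (q - q⁻¹) else 0) • (vB K N i ⊗ₜ[K] vB K N j)
    | (Sum.inr i, Sum.inr j) =>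
        (if i = j then q ^ 2 else q) • (wB K N j ⊗ₜ[K] wB K N i) +
        (if (j : ℕ) < (i : ℕ) then q * (q - q⁻¹) else 0) • (wB K N i ⊗ₜ[K] wB K N j)
    | (Sum.inr i, Sum.inl j) =>
        (if i = j then 1 else q) • (vB K N j ⊗ₜ[K] wB K N i) -
        (if i = j then q * (q - q⁻¹) else 0) •
          ∑ k ∈ Finset.univ.filter (fun k : Fin N => (k : ℕ) < (i : ℕ)),
            (vB K N k ⊗ₜ[K] wB K N k)
    | (Sum.inl i, Sum.inr j) =>
        (if i = j then 1 else q⁻¹) • (wB K N j ⊗ₜ[K] vB K N i) +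
        (if i = j then q⁻¹ * (q - q⁻¹) else 0) •
          ∑ k ∈ Finset.univ.filter (fun k : Fin N => (i : ℕ) < (k : ℕ)),
            (wB K N k ⊗ₜ[K] vB K N k)

/-- `V_{ab} = v_a ⊗ v_b + q^{δ_{ab}+1} v_b ⊗ v_a`, intended for `a ≥ b`. -/
def VelH (a b : Fin N) : (H K N) ⊗[K] (H K N) :=
  vB K N a ⊗ₜ[K] vB K N b + (if a = b then q ^ 2 else q) • (vB K N b ⊗ₜ[K] vB K N a)

/-- `W_{ab} = w_a ⊗ w_b + q^{δ_{ab}+1} w_b ⊗ w_a`, intended for `a ≤ b`. -/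
def WelH (a b : Fin N) : (H K N) ⊗[K] (H K N) :=
  wB K N a ⊗ₜ[K] wB K N b + (if a = b then q ^ 2 else q) • (wB K N b ⊗ₜ[K] wB K N a)

/-- `M_{ij} = (id+σ)(w_i ⊗ v_j)`. -/
def Mel (i j : Fin N) : (H K N) ⊗[K] (H K N) :=
  wB K N i ⊗ₜ[K] vB K N j + (if i = j then 1 else q) • (vB K N j ⊗ₜ[K] wB K N i) -
    (if i = j then q * (q - q⁻¹) else 0) •
      ∑ k ∈ Finset.univ.filter (fun k : Fin N => (k : ℕ) < (i : ℕ)),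
        (vB K N k ⊗ₜ[K] wB K N k)

/-- `X_{ijk} = Sym₃(w_i ⊗ v_j ⊗ v_k)`, for `j ≥ k`. -/
def Xel (i j k : Fin N) : (H K N) ⊗[K] ((H K N) ⊗[K] (H K N)) :=
  Sym3 K (sigmaH K N q) (wB K N i ⊗ₜ[K] (vB K N j ⊗ₜ[K] vB K N k))

/-!
Apply the coordinate functional `v_m^*` to `(β ⊗ id)(X) = (id ⊗ β)(X)`. On the left it picks
out the terms of `X` ending in `v_m`, on the right those beginning with `v_m`; as every term
of `X_{ijk}` contains exactly one `w`, only values of `β` on `w ⊗ v` and `v ⊗ w` survive, and they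
assemble into values `β(M_{ab})`. For `X_{ijj}` with `i ≠ j` and `m = j` this gives
`(1 + q²) β(M_{ij}) = q (1 + q²) β(M_{ij})`, hence `β(M_{ij}) = 0` as `q ≠ 1`. For
`X_{ii0}` with `i ≠ 0` and `m = 0` it gives `β(M_{ii}) = q² β(M_{ii}) + (1 - q²) β(M_{00})`, hence
`β(M_{ii}) = β(M_{00})` as `q² ≠ 1`.
-/

section

variable {K} {N} {q}

section General

variable {M : Type} [AddCommGroup M] [Module K M]

lemma op1_tmul (f : M ⊗[K] M →ₗ[K] M ⊗[K] M) (x y z : M) :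
    op1 K f (x ⊗ₜ (y ⊗ₜ z)) = TensorProduct.assoc K M M M (f (x ⊗ₜ y) ⊗ₜ z) := by
  simp [op1]

lemma op2_tmul (f : M ⊗[K] M →ₗ[K] M ⊗[K] M) (x y z : M) :
    op2 K f (x ⊗ₜ (y ⊗ₜ z)) = x ⊗ₜ f (y ⊗ₜ z) :=
  rfl

lemma betaId_tmul (β : M ⊗[K] M →ₗ[K] K) (x y z : M) :
    betaId K β (x ⊗ₜ (y ⊗ₜ z)) = β (x ⊗ₜ y) • z := by
  simp [betaId]

lemma idBeta_tmul (β : M ⊗[K] M →ₗ[K] K) (x y z : M) :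
    idBeta K β (x ⊗ₜ (y ⊗ₜ z)) = β (y ⊗ₜ z) • x := by
  simp [idBeta]

end General

lemma coord_vB (j a : Fin N) :
    (hb K N).coord (Sum.inl j) (vB K N a) = if a = j then 1 else 0 := by
  simp [vB, Finsupp.single_apply]

lemma coord_wB (j a : Fin N) : (hb K N).coord (Sum.inl j) (wB K N a) = 0 := by
  simp [wB]

lemma sigmaH_wB_vB (i j : Fin N) : sigmaH K N q (wB K N i ⊗ₜ vB K N j) =
    (if i = j then 1 else q) • (vB K N j ⊗ₜ[K] wB K N i) -
      (if i = j then q * (q - q⁻¹) else 0) •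
        ∑ k ∈ Finset.univ.filter (fun k : Fin N => (k : ℕ) < (i : ℕ)),
          (vB K N k ⊗ₜ[K] wB K N k) := by
  conv_lhs => rw [show wB K N i ⊗ₜ[K] vB K N j =
      (hb K N).tensorProduct (hb K N) (Sum.inr i, Sum.inl j) from
    (Module.Basis.tensorProduct_apply ..).symm, sigmaH, Module.Basis.constr_basis]

lemma sigmaH_vB_vB (i j : Fin N) : sigmaH K N q (vB K N i ⊗ₜ vB K N j) =
    (if i = j then q ^ 2 else q) • (vB K N j ⊗ₜ[K] vB K N i) +
      (if (i : ℕ) < (j : ℕ) then q * (q - q⁻¹) else 0) •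
        (vB K N i ⊗ₜ[K] vB K N j) := by
  conv_lhs => rw [show vB K N i ⊗ₜ[K] vB K N j =
      (hb K N).tensorProduct (hb K N) (Sum.inl i, Sum.inl j) from
    (Module.Basis.tensorProduct_apply ..).symm, sigmaH, Module.Basis.constr_basis]

lemma sigmaH_wB_vB_of_ne {i j : Fin N} (h : i ≠ j) :
    sigmaH K N q (wB K N i ⊗ₜ vB K N j) = q • (vB K N j ⊗ₜ[K] wB K N i) := by
  simp [sigmaH_wB_vB, h]

lemma sigmaH_vB_vB_self (i : Fin N) :
    sigmaH K N q (vB K N i ⊗ₜ vB K N i) = q ^ 2 • (vB K N i ⊗ₜ[K] vB K N i) := by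
  simp [sigmaH_vB_vB]

lemma sigmaH_wB_vB_zero [NeZero N] (k : Fin N) :
    sigmaH K N q (wB K N k ⊗ₜ vB K N 0) =
      (if k = 0 then 1 else q) • (vB K N 0 ⊗ₜ[K] wB K N k) := by
  split_ifs with hk
  · subst hk; simp [sigmaH_wB_vB]
  · exact sigmaH_wB_vB_of_ne hk

lemma sigmaH_vB_vB_zero [NeZero N] (k : Fin N) :
    sigmaH K N q (vB K N k ⊗ₜ vB K N 0) =
      (if k = 0 then q ^ 2 else q) • (vB K N 0 ⊗ₜ[K] vB K N k) := by
  simp [sigmaH_vB_vB]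

lemma sigmaH_wB_vB_self (i : Fin N) : sigmaH K N q (wB K N i ⊗ₜ vB K N i) =
    vB K N i ⊗ₜ[K] wB K N i - (q * (q - q⁻¹)) •
      ∑ k ∈ Finset.univ.filter (fun k : Fin N => (k : ℕ) < (i : ℕ)),
        vB K N k ⊗ₜ[K] wB K N k := by
  simp [sigmaH_wB_vB]

lemma Xel_of_ne {i j : Fin N} (h : i ≠ j) : Xel K N q i j j =
    (1 + q ^ 2) • (wB K N i ⊗ₜ (vB K N j ⊗ₜ[K] vB K N j))
      + (q + q ^ 3) • (vB K N j ⊗ₜ (wB K N i ⊗ₜ[K] vB K N j))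
      + (q ^ 2 + q ^ 4) • (vB K N j ⊗ₜ (vB K N j ⊗ₜ[K] wB K N i)) := by
  simp only [Xel, Sym3, LinearMap.add_apply, LinearMap.comp_apply, LinearMap.id_apply, op1_tmul,
    op2_tmul, sigmaH_wB_vB_of_ne h, sigmaH_vB_vB_self, map_smul, ← smul_tmul', tmul_smul,
    TensorProduct.assoc_tmul]
  module

lemma Xel_self_zero [NeZero N] {i : Fin N} (hi : i ≠ 0) : Xel K N q i i 0 =
    wB K N i ⊗ₜ (vB K N i ⊗ₜ[K] vB K N 0)
      + (vB K N i ⊗ₜ (wB K N i ⊗ₜ[K] vB K N 0) - (q * (q - q⁻¹)) •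
          ∑ k ∈ Finset.univ.filter (fun k : Fin N => (k : ℕ) < (i : ℕ)),
            vB K N k ⊗ₜ (wB K N k ⊗ₜ[K] vB K N 0))
      + q • (wB K N i ⊗ₜ (vB K N 0 ⊗ₜ[K] vB K N i))
      + q ^ 2 • (vB K N 0 ⊗ₜ (wB K N i ⊗ₜ[K] vB K N i))
      + (q • (vB K N i ⊗ₜ (vB K N 0 ⊗ₜ[K] wB K N i)) - (q * (q - q⁻¹)) •
          ∑ k ∈ Finset.univ.filter (fun k : Fin N => (k : ℕ) < (i : ℕ)),
            (if k = 0 then 1 else q) • (vB K N k ⊗ₜ (vB K N 0 ⊗ₜ[K] wB K N k)))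
      + (q ^ 2 • (vB K N 0 ⊗ₜ (vB K N i ⊗ₜ[K] wB K N i)) - (q * (q - q⁻¹) * q ^ 2) •
          ∑ k ∈ Finset.univ.filter (fun k : Fin N => (k : ℕ) < (i : ℕ)),
            vB K N 0 ⊗ₜ (vB K N k ⊗ₜ[K] wB K N k)) := by
  have hcoef (k : Fin N) :
      (if k = 0 then (1 : K) else q) * (if k = 0 then q ^ 2 else q) = q ^ 2 := by
    split_ifs <;> ring
  simp only [Xel, Sym3, LinearMap.add_apply, LinearMap.comp_apply, LinearMap.id_apply, op1_tmul,
    op2_tmul, sigmaH_wB_vB_of_ne hi, sigmaH_wB_vB_self, sigmaH_vB_vB_zero, sigmaH_wB_vB_zero,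
    map_sub (TensorProduct.assoc K (H K N) (H K N) (H K N)),
    map_sum (TensorProduct.assoc K (H K N) (H K N) (H K N)),
    map_smul (TensorProduct.assoc K (H K N) (H K N) (H K N)), map_smul, map_sub, map_sum,
    ← smul_tmul', tmul_smul, TensorProduct.assoc_tmul, sub_tmul, sum_tmul, smul_smul, hcoef,
    if_neg hi, ← Finset.smul_sum]
  module

variable (β : H K N ⊗[K] H K N →ₗ[K] K)

lemma coord_betaId_Xel_of_ne {i j : Fin N} (h : i ≠ j) :
    (hb K N).coord (Sum.inl j) (betaId K β (Xel K N q i j j)) =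
      (1 + q ^ 2) * β (Mel K N q i j) := by
  simp only [Xel_of_ne h, map_add, map_smul, betaId_tmul, coord_vB, coord_wB, Mel, if_neg h,
    if_pos, smul_eq_mul, mul_one, mul_zero, add_zero, zero_smul, sub_zero]
  ring

lemma coord_idBeta_Xel_of_ne {i j : Fin N} (h : i ≠ j) :
    (hb K N).coord (Sum.inl j) (idBeta K β (Xel K N q i j j)) =
      q * (1 + q ^ 2) * β (Mel K N q i j) := by
  simp only [Xel_of_ne h, map_add, map_smul, idBeta_tmul, coord_vB, coord_wB, Mel, if_neg h,
    if_pos, smul_eq_mul, mul_one, mul_zero, zero_add, zero_smul, sub_zero]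
  ring

lemma coord_betaId_Xel_self_zero [NeZero N] {i : Fin N} (hi : i ≠ 0) :
    (hb K N).coord (Sum.inl 0) (betaId K β (Xel K N q i i 0)) = β (Mel K N q i i) := by
  simp only [Xel_self_zero hi, map_add, map_sub, map_smul, map_sum, betaId_tmul, coord_vB,
    coord_wB, Mel, if_pos, if_neg hi, smul_eq_mul, mul_one, mul_zero, add_zero,
    Finset.sum_const_zero, sub_self]
  ring

lemma coord_idBeta_Xel_self_zero [NeZero N] {i : Fin N} (hi : i ≠ 0) :
    (hb K N).coord (Sum.inl 0) (idBeta K β (Xel K N q i i 0)) =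
      q ^ 2 * β (Mel K N q i i) - q * (q - q⁻¹) * β (Mel K N q 0 0) := by
  have h0i : (0 : Fin N) ∈ Finset.univ.filter (fun k : Fin N => (k : ℕ) < (i : ℕ)) := by
    simpa [Fin.pos_iff_ne_zero] using hi
  simp only [Xel_self_zero hi, map_add, map_sub, map_smul, map_sum, idBeta_tmul, coord_vB,
    coord_wB, Mel, if_pos, if_neg hi, smul_eq_mul, mul_one, mul_zero, zero_add, add_zero, zero_sub,
    mul_ite, ite_mul, Finset.sum_ite_eq', if_pos h0i, Fin.coe_ofNat_eq_mod, Nat.zero_mod,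
    not_lt_zero, Finset.filter_false, Finset.sum_empty, map_zero, sub_zero]
  ring

lemma beta_Mel_eq_zero_of_ne (hq : q ≠ 1) (hq2 : 1 + q ^ 2 ≠ 0) {i j : Fin N} (h : i ≠ j)
    (hX : betaId K β (Xel K N q i j j) = idBeta K β (Xel K N q i j j)) :
    β (Mel K N q i j) = 0 := by
  have hcoord := congrArg ((hb K N).coord (Sum.inl j)) hX
  rw [coord_betaId_Xel_of_ne β h, coord_idBeta_Xel_of_ne β h] at hcoord
  have hprod : (1 - q) * (1 + q ^ 2) * β (Mel K N q i j) = 0 := by linear_combination hcoord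
  simpa [sub_ne_zero.mpr hq.symm, hq2] using hprod

lemma beta_Mel_self_eq [NeZero N] (hq : q ≠ 0) (hq2 : q ^ 2 ≠ 1) (i : Fin N)
    (hX : betaId K β (Xel K N q i i 0) = idBeta K β (Xel K N q i i 0)) :
    β (Mel K N q i i) = β (Mel K N q 0 0) := by
  rcases eq_or_ne i 0 with rfl | hi
  · rfl
  have hcoord := congrArg ((hb K N).coord (Sum.inl 0)) hX
  have hc : q * (q - q⁻¹) = q ^ 2 - 1 := by field_simp
  rw [coord_betaId_Xel_self_zero β hi, coord_idBeta_Xel_self_zero β hi, hc] at hcoord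
  have hprod : (1 - q ^ 2) * (β (Mel K N q i i) - β (Mel K N q 0 0)) = 0 := by
    linear_combination hcoord
  simpa [sub_ne_zero.mpr hq2.symm, sub_eq_zero] using hprod

end

theorem beta_on_M (hN : 2 ≤ N) (hq0 : (0 : ℝ) < q') (hq1 : q' < 1)
    (β : (H ℝ N) ⊗[ℝ] (H ℝ N) →ₗ[ℝ] ℝ)
    (hX : ∀ i j k : Fin N, k ≤ j →
      betaId ℝ β (Xel ℝ N q' i j k) = idBeta ℝ β (Xel ℝ N q' i j k)) :
    ∃ c : ℝ, ∀ i j : Fin N, β (Mel ℝ N q' i j) = if i = j then c else 0 := by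
  have : NeZero N := ⟨by omega⟩
  refine ⟨β (Mel ℝ N q' 0 0), fun i j => ?_⟩
  split_ifs with h
  · subst h
    exact beta_Mel_self_eq β hq0.ne' (by nlinarith) i (hX i i 0 (Fin.zero_le i))
  · exact beta_Mel_eq_zero_of_ne β hq1.ne (by positivity) h (hX i j j le_rfl)

end
end
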